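/- arXiv:math/0409263 — 4 statements merged into one kernel-verified Lean document; each statement's English description precedes it below -/
import Mathlib

section
/- Every distributive ⟨∨,0⟩-semilattice D is a ⟨∨,0⟩-retract of an ultraboolean ⟨∨,0⟩-semilattice B: there exist an ultraboolean ⟨∨,0⟩-semilattice B and ⟨∨,0⟩-homomorphisms ε : D → B and μ : B → D with μ ∘ ε = id_D. Furthermore, if D has a largest element, then B can be taken to have a largest element, with ε preserving it. -/
universe u

/-- A join-semilattice is distributive if whenever `c ≤ a ⊔ b` there are
`x ≤ a` and `y ≤ b` with `c = x ⊔ y`. -/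
def SupDistrib (α : Type*) [SemilatticeSup α] : Prop :=
  ∀ a b c : α, c ≤ a ⊔ b → ∃ x y, x ≤ a ∧ y ≤ b ∧ c = x ⊔ y

/-- A `⟨∨,0⟩`-homomorphism: preserves binary joins and the least element. -/
def IsSupBotHom {α β : Type*} [SemilatticeSup α] [OrderBot α] [SemilatticeSup β] [OrderBot β]
    (f : α → β) : Prop :=
  (∀ a b : α, f (a ⊔ b) = f a ⊔ f b) ∧ f ⊥ = ⊥

/-- Bundled `⟨∨,0⟩`-semilattices. -/
structure SL : Type (u + 1) where
  carrier : Type u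
  [instSup : SemilatticeSup carrier]
  [instBot : OrderBot carrier]

attribute [instance] SL.instSup SL.instBot

instance : CoeSort SL.{u} (Type u) := ⟨SL.carrier⟩

/-- A `⟨∨,0⟩`-subsemilattice: a subset containing `⊥` and closed under binary joins. -/
def IsSubSemilat {α : Type*} [SemilatticeSup α] [OrderBot α] (s : Set α) : Prop :=
  ⊥ ∈ s ∧ ∀ ⦃x⦄, x ∈ s → ∀ ⦃y⦄, y ∈ s → x ⊔ y ∈ s

/-- A `⟨∨,0⟩`-semilattice is ultraboolean if it is the union of a directed family of
finite `⟨∨,0⟩`-subsemilattices, each of which is a Boolean lattice under the induced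
ordering (i.e. order-isomorphic to the powerset lattice of a finite set). -/
def Ultraboolean (α : Type*) [SemilatticeSup α] [OrderBot α] : Prop :=
  ∃ F : Set (Set α), DirectedOn (· ⊆ ·) F ∧ (∀ x : α, ∃ s ∈ F, x ∈ s) ∧
    ∀ s ∈ F, IsSubSemilat s ∧ s.Finite ∧ ∃ n : ℕ, Nonempty (↥s ≃o Finset (Fin n))

/-!
Adjoin to a ⟨∨,0⟩-semilattice `X`, for every finite ⟨∨,0⟩-subsemilattice `S` and every `s ∈ S`,
an atom `(S, s)`, subject to `x = ⋁ {(S, s) | s ∈ S, ¬ x ≤ s}` for `x ∈ S`. Joins of atoms of `S`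
form a finite Boolean lattice containing the image of `S`. Iterating this `ω` times from `D`
gives a direct limit `B` in which every element lies in such a Boolean piece, and any two pieces
lie in a third one (the one of a finite subsemilattice containing both, one level up).

Distributivity enters through one lemma: a ⟨∨,0⟩-homomorphism `μ` from a finite subsemilattice
`S` to a distributive semilattice factors through `x ↦ {s ∈ S | ¬ x ≤ s}`, i.e. it has "measures"
on the atoms of `S`. So homomorphisms into `D` extend step by step to `B`, which gives the
retraction; the same extension, into power sets, shows that the pieces really are Boolean.
A largest element stays largest because every atom `(S, s)` lies below some `x ∈ S`.
-/

open Classical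

noncomputable section

theorem SupBotHom.isSupBotHom {α β : Type*} [SemilatticeSup α] [OrderBot α] [SemilatticeSup β]
    [OrderBot β] (f : SupBotHom α β) : IsSupBotHom f :=
  ⟨map_sup f, map_bot f⟩

theorem SupDistrib.of_distribLattice (α : Type*) [DistribLattice α] : SupDistrib α :=
  fun a b c h => ⟨c ⊓ a, c ⊓ b, inf_le_right, inf_le_right, by rw [← inf_sup_left, inf_eq_left.2 h]⟩

theorem SupBotHom.isSubSemilat_range {α β : Type*} [SemilatticeSup α] [OrderBot α]
    [SemilatticeSup β] [OrderBot β] (f : SupBotHom α β) : IsSubSemilat (Set.range f) :=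
  ⟨⟨⊥, map_bot f⟩, by
    rintro _ ⟨x, rfl⟩ _ ⟨y, rfl⟩
    exact ⟨x ⊔ y, map_sup f x y⟩⟩

theorem isSubSemilat_pair {α : Type*} [SemilatticeSup α] [OrderBot α] (x : α) :
    IsSubSemilat ((({⊥, x} : Finset α)) : Set α) := by
  refine ⟨by simp, ?_⟩
  simp only [Finset.coe_insert, Finset.coe_singleton, Set.mem_insert_iff, Set.mem_singleton_iff]
  rintro _ (rfl | rfl) _ (rfl | rfl) <;> simp

theorem exists_isSubSemilat_superset {α : Type*} [SemilatticeSup α] [OrderBot α]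
    (A : Finset α) : ∃ T : Finset α, A ⊆ T ∧ IsSubSemilat (T : Set α) := by
  have hfin : (supClosure (insert ⊥ (A : Set α))).Finite :=
    ((A.finite_toSet).insert ⊥).supClosure
  refine ⟨hfin.toFinset, fun a ha => ?_, ?_⟩
  · exact hfin.mem_toFinset.2 (subset_supClosure (Set.mem_insert_of_mem _ ha))
  · rw [hfin.coe_toFinset]
    exact ⟨subset_supClosure (Set.mem_insert _ _), supClosed_supClosure⟩

def Equiv.finsetOrderIso {α β : Type*} (e : α ≃ β) : Finset α ≃o Finset β where
  toEquiv := e.finsetCongr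
  map_rel_iff' := by simp [Equiv.finsetCongr_apply]

theorem Finset.sup_singleton_set {α : Type*} (A : Finset α) :
    A.sup (fun a => ({a} : Set α)) = A := by
  rw [Finset.sup_set_eq_biUnion]
  exact Set.biUnion_of_singleton (A : Set α)

/-! ### Quotients of a semilattice by the congruence generated by a relation -/

section SupQuotient

variable {M : Type*} [SemilatticeSup M] (R : M → M → Prop)

def SupQuotient.Step (p q : M) : Prop :=
  ∃ s t a, R s t ∧ p = s ⊔ a ∧ q = t ⊔ a

/-- `Quot` identifies the equivalence generated by `Step R`, which is a congruence because `Step R`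
is stable under joins. -/
def SupQuotient : Type _ := Quot (SupQuotient.Step R)

namespace SupQuotient

variable {R}

theorem step_sup_right {p q : M} (h : Step R p q) (c : M) : Step R (p ⊔ c) (q ⊔ c) := by
  obtain ⟨s, t, a, hst, rfl, rfl⟩ := h
  exact ⟨s, t, a ⊔ c, hst, sup_assoc .., sup_assoc ..⟩

variable (R) in
def mk (p : M) : SupQuotient R := Quot.mk _ p

theorem mk_surjective : Function.Surjective (mk R) := Quot.mk_surjective

instance : SemilatticeSup (SupQuotient R) :=
  @SemilatticeSup.mk' _
    ⟨Quot.map₂ (· ⊔ ·)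
      (fun a _ _ h => by simpa only [sup_comm a] using step_sup_right h a)
      (fun _ _ b h => step_sup_right h b)⟩
    (Quot.ind fun a => Quot.ind fun b => congrArg (mk R) (sup_comm a b))
    (Quot.ind fun a => Quot.ind fun b => Quot.ind fun c => congrArg (mk R) (sup_assoc a b c))
    (Quot.ind fun a => congrArg (mk R) (sup_idem a))

theorem mk_sup (p q : M) : mk R (p ⊔ q) = mk R p ⊔ mk R q := rfl

variable [OrderBot M]

theorem mk_eq_mk_of_rel {s t : M} (h : R s t) : mk R s = mk R t :=
  Quot.sound ⟨s, t, ⊥, h, (sup_bot_eq s).symm, (sup_bot_eq t).symm⟩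

instance : OrderBot (SupQuotient R) where
  bot := mk R ⊥
  bot_le := Quot.ind fun a => congrArg (mk R) (bot_sup_eq a)

variable {E : Type*} [SemilatticeSup E] [OrderBot E]

def lift (v : SupBotHom M E) (hv : ∀ s t, R s t → v s = v t) : SupBotHom (SupQuotient R) E where
  toFun := Quot.lift v <| by
    rintro _ _ ⟨s, t, a, hst, rfl, rfl⟩
    rw [map_sup, map_sup, hv s t hst]
  map_sup' := Quot.ind fun _ => Quot.ind fun _ => map_sup v _ _
  map_bot' := map_bot v

theorem lift_mk (v : SupBotHom M E) (hv) (p : M) : lift (R := R) v hv (mk R p) = v p := rfl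

end SupQuotient

end SupQuotient

/-! ### Direct limits of `⟨∨,0⟩`-semilattices -/

section SupDirectLimit

variable {ι : Type*} [Preorder ι] [IsDirectedOrder ι] (G : ι → Type*)
  [∀ i, SemilatticeSup (G i)] [∀ i, OrderBot (G i)]
  (f : ∀ i j, i ≤ j → SupBotHom (G i) (G j)) [DirectedSystem G (f · · ·)]

/-- `DirectLimit G f` already carries the quotient preorder of `Mathlib.Order.Quotient`; this
synonym carries the order given by the joins instead. -/
def SupDirectLimit : Type _ := DirectLimit G f

namespace SupDirectLimit

variable {G f}

variable (f) in
protected def mk (i : ι) (x : G i) : SupDirectLimit G f := (⟦⟨i, x⟩⟧ : DirectLimit G f)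

@[elab_as_elim]
protected theorem induction {C : SupDirectLimit G f → Prop}
    (h : ∀ i x, C (SupDirectLimit.mk f i x)) (z : SupDirectLimit G f) : C z :=
  DirectLimit.induction f h z

@[elab_as_elim]
protected theorem induction₂ {C : SupDirectLimit G f → SupDirectLimit G f → Prop}
    (h : ∀ i x y, C (SupDirectLimit.mk f i x) (SupDirectLimit.mk f i y))
    (z w : SupDirectLimit G f) : C z w :=
  DirectLimit.induction₂ f h z w

@[elab_as_elim]
protected theorem induction₃
    {C : SupDirectLimit G f → SupDirectLimit G f → SupDirectLimit G f → Prop}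
    (h : ∀ i x y z, C (SupDirectLimit.mk f i x) (SupDirectLimit.mk f i y) (SupDirectLimit.mk f i z))
    (u v w : SupDirectLimit G f) : C u v w :=
  DirectLimit.induction₃ f h u v w

protected def sup (z w : SupDirectLimit G f) : SupDirectLimit G f :=
  DirectLimit.map₂ f f f (fun _ => (· ⊔ ·)) (fun _ _ _ => map_sup _) z w

theorem sup_mk (i : ι) (x y : G i) :
    SupDirectLimit.sup (SupDirectLimit.mk f i x) (SupDirectLimit.mk f i y) =
      SupDirectLimit.mk f i (x ⊔ y) :=
  DirectLimit.map₂_def (F₁ := G) (F₂ := G) (F := G) f f f (fun _ => (· ⊔ ·))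
    (fun _ _ _ => map_sup _) i x y

instance : SemilatticeSup (SupDirectLimit G f) :=
  @SemilatticeSup.mk' _ ⟨SupDirectLimit.sup⟩
    (SupDirectLimit.induction₂ fun i x y => by simp only [sup_mk, sup_comm])
    (SupDirectLimit.induction₃ fun i x y z => by simp only [sup_mk, sup_assoc])
    (SupDirectLimit.induction fun i x => by simp only [sup_mk, sup_idem])

theorem mk_sup (i : ι) (x y : G i) :
    SupDirectLimit.mk f i (x ⊔ y) = SupDirectLimit.mk f i x ⊔ SupDirectLimit.mk f i y :=
  (sup_mk i x y).symm

variable [Nonempty ι]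

protected def bot : SupDirectLimit G f := DirectLimit.map₀ f fun _ => ⊥

theorem bot_def (i : ι) : SupDirectLimit.bot = SupDirectLimit.mk f i ⊥ :=
  DirectLimit.map₀_def f _ (fun _ _ _ => map_bot _) i

instance : OrderBot (SupDirectLimit G f) where
  bot := SupDirectLimit.bot
  bot_le := SupDirectLimit.induction fun i x => sup_eq_right.mp <| by
    change SupDirectLimit.sup _ _ = _
    rw [bot_def i, sup_mk, bot_sup_eq]

variable (f) in
def of (i : ι) : SupBotHom (G i) (SupDirectLimit G f) where
  toFun := SupDirectLimit.mk f i
  map_sup' := mk_sup i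
  map_bot' := (bot_def i).symm

theorem of_map (i j : ι) (h : i ≤ j) (x : G i) : of f j (f i j h x) = of f i x :=
  DirectLimit.mk_apply i j x h

theorem exists_eq_of (z : SupDirectLimit G f) : ∃ i x, z = of f i x :=
  DirectLimit.exists_eq_mk f z

theorem exists_map_eq_of_of_eq {i : ι} {x y : G i} (h : of f i x = of f i y) :
    ∃ k, ∃ hk : i ≤ k, f i k hk x = f i k hk y := by
  obtain ⟨k, hx, hy, hxy⟩ := Quotient.exact h
  exact ⟨k, hx, hxy⟩

variable {E : Type*} [SemilatticeSup E] [OrderBot E]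

def lift (g : ∀ i, SupBotHom (G i) E) (compat : ∀ i j h x, g i x = g j (f i j h x)) :
    SupBotHom (SupDirectLimit G f) E where
  toFun := DirectLimit.lift f (fun i => g i) compat
  map_sup' := SupDirectLimit.induction₂ fun i x y => by
    rw [← mk_sup]
    exact map_sup (g i) x y
  map_bot' := by
    obtain ⟨i⟩ := ‹Nonempty ι›
    rw [← map_bot (of f i)]
    exact map_bot (g i)

end SupDirectLimit

end SupDirectLimit

/-! ### Measures on finite subsemilattices -/

section CoverMeasure

variable {X E : Type*} [SemilatticeSup X] [OrderBot X] [SemilatticeSup E] [OrderBot E]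

theorem SupDistrib.exists_sup_eq_of_le_sup (hE : SupDistrib E) {ι : Type*} (Y : Finset ι)
    {e a : E} {b : ι → E} (h : ∀ y ∈ Y, e ≤ a ⊔ b y) :
    ∃ c d, e = c ⊔ d ∧ d ≤ a ∧ ∀ y ∈ Y, c ≤ b y := by
  classical
  induction Y using Finset.induction_on with
  | empty => exact ⟨e, ⊥, (sup_bot_eq e).symm, bot_le, by simp⟩
  | insert y Y hy ih =>
    obtain ⟨c, d, rfl, hd, hc⟩ := ih fun z hz => h z (Finset.mem_insert_of_mem hz)
    obtain ⟨p, q, hp, hq, rfl⟩ :=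
      hE a (b y) c (le_sup_left.trans (h y (Finset.mem_insert_self y Y)))
    refine ⟨q, p ⊔ d, by rw [sup_comm p q, sup_assoc], sup_le hp hd, ?_⟩
    intro z hz
    rcases Finset.mem_insert.1 hz with rfl | hz
    exacts [hq, le_sup_right.trans (hc z hz)]

theorem exists_mem_le_sup_of_maximal {S U : Finset X} (hS : IsSubSemilat (S : Set X)) {t : X}
    (ht : Maximal (· ∈ {s ∈ S | ∀ u ∈ U, ¬ u ≤ s}) t) {y : X} (hyS : y ∈ S) (hyt : ¬ y ≤ t) :
    ∃ u ∈ U, u ≤ t ⊔ y := by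
  by_contra! h
  exact hyt (le_sup_right.trans
    (ht.le_of_ge (Finset.mem_filter.2 ⟨hS.2 (Finset.mem_filter.1 ht.prop).1 hyS, h⟩) le_sup_left))

/-- Only the `s` above no element of `U` are used. A maximal such `t` splits `e` into a part
below every `μ y` with `¬ y ≤ t`, which becomes the value at `t`, and a part below `μ t`, which is
covered by induction after adding `t` to `U`. -/
theorem exists_le_sup_of_le (hE : SupDistrib E) (μ : SupBotHom X E) {S : Finset X}
    (hS : IsSubSemilat (S : Set X)) (U : Finset X) (hU : U ⊆ S) {e : E}
    (he : ∀ u ∈ U, e ≤ μ u) :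
    ∃ m : X → E, (∀ s ∈ S, ∀ y ∈ S, ¬ y ≤ s → m s ≤ μ y) ∧
      e ≤ {s ∈ S | ∀ u ∈ U, ¬ u ≤ s}.sup m := by
  induction hk : (S \ U).card using Nat.strong_induction_on generalizing U e with
  | _ k ih =>
  by_cases hbot : ⊥ ∈ U
  · refine ⟨⊥, fun _ _ _ _ _ => bot_le, ?_⟩
    exact ((he ⊥ hbot).trans (map_bot μ).le).trans bot_le
  obtain ⟨t, ht⟩ := Finset.exists_maximal (s := {s ∈ S | ∀ u ∈ U, ¬ u ≤ s})
    ⟨⊥, Finset.mem_filter.2 ⟨hS.1, fun u hu h => hbot (le_bot_iff.1 h ▸ hu)⟩⟩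
  obtain ⟨htS, htU⟩ := Finset.mem_filter.1 ht.prop
  have hsplit : ∀ y ∈ {y ∈ S | ¬ y ≤ t}, e ≤ μ t ⊔ μ y := by
    intro y hy
    obtain ⟨hyS, hyt⟩ := Finset.mem_filter.1 hy
    obtain ⟨u, hu, hut⟩ := exists_mem_le_sup_of_maximal hS ht hyS hyt
    exact (he u hu).trans ((OrderHomClass.mono μ hut).trans (map_sup μ t y).le)
  obtain ⟨c, d, rfl, hd, hc⟩ := hE.exists_sup_eq_of_le_sup _ hsplit
  have hcard : (S \ insert t U).card < k := by
    rw [← hk]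
    refine Finset.card_lt_card (Finset.ssubset_iff_of_subset ?_ |>.2 ⟨t, ?_, ?_⟩)
    · exact Finset.sdiff_subset_sdiff le_rfl (Finset.subset_insert t U)
    · exact Finset.mem_sdiff.2 ⟨htS, fun h => htU t h le_rfl⟩
    · simp
  obtain ⟨m, hm, hdm⟩ := ih _ hcard (insert t U) (Finset.insert_subset htS hU)
    (fun u hu => (Finset.mem_insert.1 hu).elim (· ▸ hd) fun hu => le_sup_right.trans (he u hu))
    rfl
  refine ⟨m ⊔ Function.update ⊥ t c, fun s hs y hy hys => sup_le (hm s hs y hy hys) ?_, ?_⟩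
  · rcases eq_or_ne s t with rfl | hst
    · simpa using hc y (Finset.mem_filter.2 ⟨hy, hys⟩)
    · simp [hst]
  · refine sup_le ?_ (hdm.trans ?_)
    · refine le_trans ?_ (Finset.le_sup ht.prop)
      simp
    · refine Finset.sup_mono_fun ?_ |>.trans (Finset.sup_mono ?_)
      · exact fun s _ => le_sup_left
      · intro s hs
        simp only [Finset.mem_filter, Finset.mem_insert, forall_eq_or_imp] at hs ⊢
        exact ⟨hs.1, hs.2.2⟩

theorem exists_cover_measure (hE : SupDistrib E) (μ : SupBotHom X E) {S : Finset X}
    (hS : IsSubSemilat (S : Set X)) :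
    ∃ m : X → E, ∀ x ∈ S, μ x = {s ∈ S | ¬ x ≤ s}.sup m := by
  have hcover : ∀ x ∈ S, ∃ m : X → E, (∀ s ∈ S, ∀ y ∈ S, ¬ y ≤ s → m s ≤ μ y) ∧
      μ x ≤ {s ∈ S | ¬ x ≤ s}.sup m := fun x hx => by
    simpa using exists_le_sup_of_le hE μ hS {x} (by simpa using hx) (e := μ x) (by simp)
  choose! m hm using hcover
  refine ⟨S.sup m, fun x hx => le_antisymm ?_ (Finset.sup_le fun s hs => ?_)⟩
  · exact (hm x hx).2.trans (Finset.sup_mono_fun fun s _ => Finset.le_sup (f := m) hx s)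
  · obtain ⟨hsS, hxs⟩ := Finset.mem_filter.1 hs
    rw [Finset.sup_apply]
    exact Finset.sup_le fun x' hx' => (hm x' hx').1 s hsS x hx hxs

end CoverMeasure

/-! ### Adjoining atoms that split every finite subsemilattice -/

section Refinement

variable (X : Type*) [SemilatticeSup X] [OrderBot X]

/-- The atom `⟨(S, s), _⟩` is to lie below exactly those `x ∈ S` with `¬ x ≤ s`; the last
condition discards the `s` lying above all of `S`, which would be below no `x`. -/
abbrev RefinementAtom : Type _ :=
  {a : Finset X × X // IsSubSemilat (a.1 : Set X) ∧ a.2 ∈ a.1 ∧ ∃ x ∈ a.1, ¬ x ≤ a.2}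

variable {X}

def coverAtoms (S : Finset X) (x : X) : Finset (RefinementAtom X) :=
  ({s ∈ S | ¬ x ≤ s}.image (S, ·)).subtype _

def atomsOf (S : Finset X) : Finset (RefinementAtom X) :=
  (S.image (S, ·)).subtype _

theorem mem_coverAtoms {S : Finset X} {x : X} {a : RefinementAtom X} :
    a ∈ coverAtoms S x ↔ a.1.1 = S ∧ ¬ x ≤ a.1.2 := by
  obtain ⟨⟨T, s⟩, -, hs, -⟩ := a
  simp only [coverAtoms, Finset.mem_subtype, Finset.mem_image, Finset.mem_filter, Prod.mk.injEq]
  constructor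
  · rintro ⟨s, ⟨-, hxs⟩, rfl, rfl⟩
    exact ⟨rfl, hxs⟩
  · rintro ⟨rfl, hxs⟩
    exact ⟨s, ⟨hs, hxs⟩, rfl, rfl⟩

theorem mem_atomsOf {S : Finset X} {a : RefinementAtom X} : a ∈ atomsOf S ↔ a.1.1 = S := by
  obtain ⟨⟨T, s⟩, -, hs, -⟩ := a
  simp only [atomsOf, Finset.mem_subtype, Finset.mem_image, Prod.mk.injEq]
  exact ⟨fun ⟨_, _, h, _⟩ => h.symm, fun h => ⟨s, h ▸ hs, h.symm, rfl⟩⟩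

theorem coverAtoms_subset_atomsOf (S : Finset X) (x : X) : coverAtoms S x ⊆ atomsOf S :=
  fun _ ha => mem_atomsOf.2 (mem_coverAtoms.1 ha).1

theorem sup_coverAtoms {E : Type*} [SemilatticeSup E] [OrderBot E] {S : Finset X}
    (hS : IsSubSemilat (S : Set X)) {x : X} (hx : x ∈ S) (m : Finset X × X → E) :
    (coverAtoms S x).sup (m ∘ Subtype.val) = {s ∈ S | ¬ x ≤ s}.sup fun s => m (S, s) := by
  have hatoms : ∀ p ∈ {s ∈ S | ¬ x ≤ s}.image (S, ·),
      IsSubSemilat (p.1 : Set X) ∧ p.2 ∈ p.1 ∧ ∃ x ∈ p.1, ¬ x ≤ p.2 := by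
    simp only [Finset.mem_image, Finset.mem_filter]
    rintro _ ⟨s, ⟨hs, hxs⟩, rfl⟩
    exact ⟨hS, hs, x, hx, hxs⟩
  calc (coverAtoms S x).sup (m ∘ Subtype.val)
      = ((coverAtoms S x).map (Function.Embedding.subtype _)).sup m :=
        (Finset.sup_map (coverAtoms S x) (Function.Embedding.subtype _) m).symm
    _ = _ := by rw [coverAtoms, Finset.subtype_map_of_mem hatoms, Finset.sup_image]; rfl

variable (X) in
def CoverRel (p q : X × Finset (RefinementAtom X)) : Prop :=
  ∃ S : Finset X, IsSubSemilat (S : Set X) ∧ ∃ x ∈ S, p = (x, ∅) ∧ q = (⊥, coverAtoms S x)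

variable (X) in
/-- A pair `(x, A)` stands for `x ⊔ ⋁ A`; each `x ∈ S`, for `S` a finite subsemilattice, is
identified with the join of the atoms `(S, s)` with `¬ x ≤ s`. -/
abbrev Refinement : Type _ := SupQuotient (CoverRel X)

variable {E : Type*} [SemilatticeSup E] [OrderBot E]

/-- `m p` is the value intended for the atom `p`: the condition says that `h` and `m` respect the
relations of `Refinement X`. -/
def IsCoverMeasure (h : X → E) (m : Finset X × X → E) : Prop :=
  ∀ S : Finset X, IsSubSemilat (S : Set X) → ∀ x ∈ S, h x = {s ∈ S | ¬ x ≤ s}.sup fun s => m (S, s)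

theorem exists_isCoverMeasure (hE : SupDistrib E) (h : SupBotHom X E) :
    ∃ m, IsCoverMeasure h m := by
  have hmeasure : ∀ S : Finset X, ∃ mS : X → E,
      IsSubSemilat (S : Set X) → ∀ x ∈ S, h x = {s ∈ S | ¬ x ≤ s}.sup mS := fun S => by
    by_cases hS : IsSubSemilat (S : Set X)
    · obtain ⟨mS, hmS⟩ := exists_cover_measure hE h hS
      exact ⟨mS, fun _ => hmS⟩
    · exact ⟨⊥, fun h' => absurd h' hS⟩
  choose mS hmS using hmeasure
  exact ⟨fun p => mS p.1 p.2, hmS⟩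

namespace Refinement

def emb : SupBotHom X (Refinement X) where
  toFun x := SupQuotient.mk _ (x, ∅)
  map_sup' x y := by
    rw [← SupQuotient.mk_sup, Prod.mk_sup_mk, Finset.sup_eq_union, Finset.empty_union]
  map_bot' := rfl

def atomJoin (A : Finset (RefinementAtom X)) : Refinement X := SupQuotient.mk _ (⊥, A)

theorem atomJoin_union (A B : Finset (RefinementAtom X)) :
    atomJoin (A ∪ B) = atomJoin A ⊔ atomJoin B := by
  simp only [atomJoin, ← SupQuotient.mk_sup, Prod.mk_sup_mk, bot_sup_eq, Finset.sup_eq_union]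

theorem atomJoin_mono : Monotone (atomJoin (X := X)) := fun A B h => by
  rw [← Finset.union_eq_right.2 h, atomJoin_union]
  exact le_sup_left

theorem emb_eq_atomJoin {S : Finset X} (hS : IsSubSemilat (S : Set X)) {x : X} (hx : x ∈ S) :
    emb x = atomJoin (coverAtoms S x) :=
  SupQuotient.mk_eq_mk_of_rel ⟨S, hS, x, hx, rfl, rfl⟩

theorem mk_eq_emb_sup_atomJoin (p : X × Finset (RefinementAtom X)) :
    SupQuotient.mk _ p = emb p.1 ⊔ atomJoin p.2 := by
  rw [emb, atomJoin, SupBotHom.coe_mk, SupHom.coe_mk, ← SupQuotient.mk_sup, Prod.mk_sup_mk,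
    sup_bot_eq, Finset.sup_eq_union, Finset.empty_union]

theorem isTop_emb {t : X} (ht : IsTop t) : IsTop (emb t) := by
  have hatom : ∀ a : RefinementAtom X, atomJoin {a} ≤ emb t := by
    rintro ⟨⟨S, s⟩, hS, hs, x, hx, hxs⟩
    calc atomJoin {_}
        ≤ atomJoin (coverAtoms S x) :=
          atomJoin_mono (Finset.singleton_subset_iff.2 (mem_coverAtoms.2 ⟨rfl, hxs⟩))
      _ = emb x := (emb_eq_atomJoin hS hx).symm
      _ ≤ emb t := OrderHomClass.mono emb (ht x)
  have hjoin : ∀ A : Finset (RefinementAtom X), atomJoin A ≤ emb t := by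
    intro A
    induction A using Finset.induction_on with
    | empty => exact bot_le
    | insert a A _ ih =>
      rw [Finset.insert_eq, atomJoin_union]
      exact sup_le (hatom a) ih
  intro z
  obtain ⟨p, rfl⟩ := SupQuotient.mk_surjective z
  rw [mk_eq_emb_sup_atomJoin]
  exact sup_le (OrderHomClass.mono emb (ht _)) (hjoin _)

def lift (h : SupBotHom X E) (m : Finset X × X → E) (hm : IsCoverMeasure h m) :
    SupBotHom (Refinement X) E :=
  SupQuotient.lift
    { toFun := fun p => h p.1 ⊔ p.2.sup (m ∘ Subtype.val)
      map_sup' := fun p q => by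
        simp only [Prod.fst_sup, Prod.snd_sup, map_sup, Finset.sup_eq_union, Finset.sup_union]
        exact sup_sup_sup_comm ..
      map_bot' := by simp }
    (by
      rintro _ _ ⟨S, hS, x, hx, rfl, rfl⟩
      simp [sup_coverAtoms hS hx, hm S hS x hx])

theorem lift_emb (h : SupBotHom X E) (m : Finset X × X → E) (hm : IsCoverMeasure h m) (x : X) :
    lift h m hm (emb x) = h x := by
  simp [lift, emb, SupQuotient.lift_mk]

theorem lift_atomJoin (h : SupBotHom X E) (m : Finset X × X → E) (hm : IsCoverMeasure h m)
    (A : Finset (RefinementAtom X)) : lift h m hm (atomJoin A) = A.sup (m ∘ Subtype.val) := by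
  simp [lift, atomJoin, SupQuotient.lift_mk]

def extend (hE : SupDistrib E) (h : SupBotHom X E) : SupBotHom (Refinement X) E :=
  lift h _ (exists_isCoverMeasure hE h).choose_spec

theorem extend_emb (hE : SupDistrib E) (h : SupBotHom X E) (x : X) : extend hE h (emb x) = h x :=
  lift_emb ..

variable (X) in
def atomsBelow (S : Finset X) : SupBotHom X (Set (RefinementAtom X)) where
  toFun x := {a | a.1.1 = S ∧ ¬ x ≤ a.1.2}
  map_sup' x y := by
    ext a
    simp only [Set.mem_ofPred_eq, Set.sup_eq_union, Set.mem_union, sup_le_iff]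
    tauto
  map_bot' := by simp

theorem coe_coverAtoms (S : Finset X) (x : X) :
    (coverAtoms S x : Set (RefinementAtom X)) = atomsBelow X S x := by
  ext a
  exact mem_coverAtoms

theorem setOf_val_eq_singleton (a : RefinementAtom X) : {b : RefinementAtom X | b.1 = a.1} = {a} :=
  Set.ext fun _ => Subtype.ext_iff.symm

def pieceRetraction (S : Finset X) : SupBotHom (Refinement X) (Set (RefinementAtom X)) :=
  lift (atomsBelow X S)
    (fun p => if p.1 = S then {a | a.1 = p} else
      (exists_isCoverMeasure (SupDistrib.of_distribLattice _) (atomsBelow X S)).choose p)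
    (by
      intro T hT x hx
      by_cases hTS : T = S
      · subst hTS
        simp only [↓reduceIte]
        rw [← sup_coverAtoms hT hx (fun p => {a : RefinementAtom X | a.1 = p}), Function.comp_def]
        simp only [setOf_val_eq_singleton, Finset.sup_singleton_set, coe_coverAtoms]
      · simp only [hTS, ↓reduceIte]
        exact (exists_isCoverMeasure (SupDistrib.of_distribLattice _) (atomsBelow X S)).choose_spec
          T hT x hx)

theorem pieceRetraction_atomJoin {S : Finset X} {A : Finset (RefinementAtom X)}
    (hA : A ⊆ atomsOf S) : pieceRetraction S (atomJoin A) = A := by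
  rw [← Finset.sup_singleton_set A]
  refine (lift_atomJoin _ _ _ A).trans (Finset.sup_congr rfl fun a ha => ?_)
  simp [mem_atomsOf.1 (hA ha), setOf_val_eq_singleton]

end Refinement

end Refinement

/-! ### The tower of refinements and its limit -/

section Tower

variable (D : Type u) [SemilatticeSup D] [OrderBot D]

/-- Reducible, so that lemmas about `Refinement (refinementTower D n)` apply at level `n + 1`. -/
@[reducible] def refinementTower : ℕ → SL.{u}
  | 0 => ⟨D⟩
  | n + 1 => ⟨Refinement (refinementTower n)⟩

def towerMap (i j : ℕ) (h : i ≤ j) : SupBotHom (refinementTower D i) (refinementTower D j) :=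
  Nat.leRecOn h (fun g => Refinement.emb.comp g) (SupBotHom.id _)

theorem towerMap_self (i : ℕ) (x : refinementTower D i) : towerMap D i i le_rfl x = x := by
  rw [towerMap, Nat.leRecOn_self]
  rfl

theorem towerMap_succ {i j : ℕ} (h : i ≤ j) (x : refinementTower D i) :
    towerMap D i (j + 1) (h.trans j.le_succ) x = Refinement.emb (towerMap D i j h x) := by
  rw [towerMap, Nat.leRecOn_succ h]
  rfl

instance : DirectedSystem (fun n => (refinementTower D n : Type u)) (towerMap D · · ·) where
  map_self := towerMap_self D
  map_map {k j i} hij hjk x := by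
    induction k, hjk using Nat.le_induction with
    | base => exact towerMap_self D j _
    | succ k hjk ih => rw [towerMap_succ D hjk, towerMap_succ D (hij.trans hjk), ih]

abbrev TowerLimit : Type u := SupDirectLimit (fun n => (refinementTower D n : Type u)) (towerMap D)

def TowerLimit.of (n : ℕ) : SupBotHom (refinementTower D n) (TowerLimit D) :=
  SupDirectLimit.of (towerMap D) n

theorem TowerLimit.of_towerMap {n k : ℕ} (h : n ≤ k) (x : refinementTower D n) :
    TowerLimit.of D k (towerMap D n k h x) = TowerLimit.of D n x :=
  SupDirectLimit.of_map (G := fun n => (refinementTower D n : Type u)) n k h x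

theorem TowerLimit.exists_eq_of (z : TowerLimit D) : ∃ n x, z = TowerLimit.of D n x :=
  SupDirectLimit.exists_eq_of z

variable {D} {E : Type*} [SemilatticeSup E] [OrderBot E]

theorem exists_extend_towerMap (hE : SupDistrib E) {n k : ℕ} (hnk : n ≤ k)
    (h : SupBotHom (refinementTower D n) E) :
    ∃ g : SupBotHom (refinementTower D k) E, ∀ x, g (towerMap D n k hnk x) = h x := by
  induction k, hnk using Nat.le_induction with
  | base => exact ⟨h, fun x => by rw [towerMap_self]⟩
  | succ k hnk ih =>
    obtain ⟨g, hg⟩ := ih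
    exact ⟨Refinement.extend hE g, fun x => by rw [towerMap_succ D hnk, Refinement.extend_emb, hg]⟩

section Extend

variable (hE : SupDistrib E) (h : SupBotHom (refinementTower D 0) E)

def towerExtend : ∀ n, SupBotHom (refinementTower D n) E
  | 0 => h
  | n + 1 => Refinement.extend hE (towerExtend n)

theorem towerExtend_towerMap {n k : ℕ} (hnk : n ≤ k) (x : refinementTower D n) :
    towerExtend hE h k (towerMap D n k hnk x) = towerExtend hE h n x := by
  induction k, hnk using Nat.le_induction with
  | base => rw [towerMap_self]
  | succ k hnk ih => rw [towerMap_succ D hnk, towerExtend, Refinement.extend_emb, ih]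

def limitExtend : SupBotHom (TowerLimit D) E :=
  SupDirectLimit.lift (towerExtend hE h) fun _ _ hnk x => (towerExtend_towerMap hE h hnk x).symm

theorem limitExtend_of_zero (x : refinementTower D 0) :
    limitExtend hE h (TowerLimit.of D 0 x) = h x :=
  rfl

end Extend

theorem isTop_of_zero {d : refinementTower D 0} (hd : IsTop d) : IsTop (TowerLimit.of D 0 d) := by
  have htower : ∀ n, IsTop (towerMap D 0 n n.zero_le d) := by
    intro n
    induction n with
    | zero => rwa [towerMap_self]
    | succ n ih =>
      rw [towerMap_succ D n.zero_le]
      exact Refinement.isTop_emb ih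
  intro z
  obtain ⟨n, x, rfl⟩ := TowerLimit.exists_eq_of D z
  exact (OrderHomClass.mono _ (htower n x)).trans_eq (TowerLimit.of_towerMap D n.zero_le d)

end Tower

/-! ### Boolean pieces of the limit -/

section Pieces

variable {D : Type u} [SemilatticeSup D] [OrderBot D]

def pieceMap (n : ℕ) (S : Finset (refinementTower D n)) :
    SupBotHom (Finset (atomsOf S)) (TowerLimit D) where
  toFun U := TowerLimit.of D (n + 1) (Refinement.atomJoin (U.map (Function.Embedding.subtype _)))
  map_sup' U V := by
    simp only [Finset.sup_eq_union, Finset.map_union]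
    exact (congrArg _ (Refinement.atomJoin_union _ _)).trans (map_sup (TowerLimit.of D (n + 1)) _ _)
  map_bot' := map_bot (TowerLimit.of D (n + 1))

theorem pieceMap_le_pieceMap_iff {n : ℕ} {S : Finset (refinementTower D n)}
    {U V : Finset (atomsOf S)} : pieceMap n S U ≤ pieceMap n S V ↔ U ⊆ V := by
  refine ⟨fun h => ?_, fun h => OrderHomClass.mono _ h⟩
  set a := Refinement.atomJoin (U.map (Function.Embedding.subtype (· ∈ atomsOf S)))
  set b := Refinement.atomJoin (V.map (Function.Embedding.subtype (· ∈ atomsOf S)))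
  have hab : TowerLimit.of D (n + 1) (a ⊔ b) = TowerLimit.of D (n + 1) b := by
    rw [map_sup]
    exact sup_eq_right.2 h
  obtain ⟨k, hk, hk'⟩ := SupDirectLimit.exists_map_eq_of_of_eq hab
  obtain ⟨g, hg⟩ := exists_extend_towerMap (SupDistrib.of_distribLattice _) hk
    (Refinement.pieceRetraction S)
  have hsub : ∀ W : Finset (atomsOf S), W.map (Function.Embedding.subtype _) ⊆ atomsOf S :=
    fun W _ => Finset.property_of_mem_map_subtype W
  have := congrArg g hk'
  rw [hg, hg, map_sup, Refinement.pieceRetraction_atomJoin (hsub U),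
    Refinement.pieceRetraction_atomJoin (hsub V), sup_eq_right, Finset.coe_subset,
    Finset.map_subset_map] at this
  exact this

def piece (n : ℕ) (S : Finset (refinementTower D n)) : Set (TowerLimit D) :=
  Set.range (pieceMap n S)

theorem exists_orderIso_piece (n : ℕ) (S : Finset (refinementTower D n)) :
    ∃ k, Nonempty (piece n S ≃o Finset (Fin k)) :=
  ⟨_, ⟨(OrderEmbedding.orderIso (f := OrderEmbedding.ofMapLEIff (pieceMap n S)
      fun _ _ => pieceMap_le_pieceMap_iff)).symm.trans
    (Fintype.equivFin (atomsOf S)).finsetOrderIso⟩⟩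

theorem atomJoin_mem_piece {n : ℕ} {S : Finset (refinementTower D n)}
    {A : Finset (RefinementAtom (refinementTower D n))} (hA : A ⊆ atomsOf S) :
    TowerLimit.of D (n + 1) (Refinement.atomJoin A) ∈ piece n S :=
  ⟨A.subtype (· ∈ atomsOf S), by
    change TowerLimit.of D (n + 1) (Refinement.atomJoin ((A.subtype _).map _)) = _
    rw [Finset.subtype_map_of_mem hA]⟩

theorem of_mem_piece {n : ℕ} {S : Finset (refinementTower D n)}
    (hS : IsSubSemilat (S : Set (refinementTower D n)))
    {x : refinementTower D n} (hx : x ∈ S) : TowerLimit.of D n x ∈ piece n S := by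
  rw [← TowerLimit.of_towerMap D n.le_succ x, towerMap_succ D le_rfl, towerMap_self,
    Refinement.emb_eq_atomJoin hS hx]
  exact atomJoin_mem_piece (coverAtoms_subset_atomsOf S x)

theorem image_subset_piece {m : ℕ} {A T : Finset (refinementTower D m)}
    (hT : IsSubSemilat (T : Set (refinementTower D m))) (hA : A ⊆ T) :
    TowerLimit.of D m '' (A : Set (refinementTower D m)) ⊆ piece m T := by
  rintro _ ⟨x, hx, rfl⟩
  exact of_mem_piece hT (hA hx)

theorem piece_subset_image {n m : ℕ} (S : Finset (refinementTower D n)) (hm : n + 1 ≤ m) :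
    ∃ A : Finset (refinementTower D m),
      piece n S ⊆ TowerLimit.of D m '' (A : Set (refinementTower D m)) := by
  refine ⟨Finset.univ.image fun U : Finset (atomsOf S) => towerMap D (n + 1) m hm
    (Refinement.atomJoin (U.map (Function.Embedding.subtype (· ∈ atomsOf S)))), ?_⟩
  rintro _ ⟨U, rfl⟩
  exact ⟨_, Finset.mem_image_of_mem _ (Finset.mem_univ U), TowerLimit.of_towerMap D hm _⟩

theorem piece_directed {n₁ n₂ : ℕ} (S₁ : Finset (refinementTower D n₁))
    (S₂ : Finset (refinementTower D n₂)) :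
    ∃ m, ∃ T : Finset (refinementTower D m), piece n₁ S₁ ⊆ piece m T ∧ piece n₂ S₂ ⊆ piece m T := by
  obtain ⟨A₁, h₁⟩ := piece_subset_image S₁ (le_max_left (n₁ + 1) (n₂ + 1))
  obtain ⟨A₂, h₂⟩ := piece_subset_image S₂ (le_max_right (n₁ + 1) (n₂ + 1))
  obtain ⟨T, hAT, hT⟩ := exists_isSubSemilat_superset (A₁ ∪ A₂)
  exact ⟨_, T, h₁.trans (image_subset_piece hT (Finset.subset_union_left.trans hAT)),
    h₂.trans (image_subset_piece hT (Finset.subset_union_right.trans hAT))⟩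

variable (D) in
theorem ultraboolean_towerLimit : Ultraboolean (TowerLimit D) := by
  refine ⟨Set.range fun p : Σ n, Finset (refinementTower D n) => piece p.1 p.2, ?_, ?_, ?_⟩
  · rintro _ ⟨⟨n₁, S₁⟩, rfl⟩ _ ⟨⟨n₂, S₂⟩, rfl⟩
    obtain ⟨m, T, h₁, h₂⟩ := piece_directed S₁ S₂
    exact ⟨_, ⟨⟨m, T⟩, rfl⟩, h₁, h₂⟩
  · intro z
    obtain ⟨n, x, rfl⟩ := TowerLimit.exists_eq_of D z
    exact ⟨_, ⟨⟨n, {⊥, x}⟩, rfl⟩, of_mem_piece (isSubSemilat_pair x) (by simp)⟩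
  · rintro _ ⟨⟨n, S⟩, rfl⟩
    exact ⟨(pieceMap n S).isSubSemilat_range, Set.finite_range _, exists_orderIso_piece n S⟩

end Pieces

end

/-- Every distributive `⟨∨,0⟩`-semilattice `D` is a `⟨∨,0⟩`-retract of an ultraboolean
`⟨∨,0⟩`-semilattice `B`; moreover if `D` has a largest element then `B` can be taken
to have one, preserved by `ε`. -/
theorem stmt1 {D : Type u} [SemilatticeSup D] [OrderBot D] (hD : SupDistrib D) :
    ∃ (B : SL.{u}) (ε : D → B) (μ : B → D),
      Ultraboolean B.carrier ∧ IsSupBotHom ε ∧ IsSupBotHom μ ∧ μ ∘ ε = id ∧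
      ∀ d : D, IsTop d → IsTop (ε d) :=
  ⟨⟨TowerLimit D⟩, TowerLimit.of D 0, limitExtend hD (SupBotHom.id D),
    ultraboolean_towerLimit D, (TowerLimit.of D 0).isSupBotHom,
    (limitExtend hD (SupBotHom.id D)).isSupBotHom, funext (limitExtend_of_zero hD _),
    fun _ => isTop_of_zero⟩
end

section
/- There exists a functorial retraction ⟨GS, ε, μ⟩ of the category of ⟨∨,0⟩-semilattices with ⟨∨,0⟩-embeddings to the full subcategory of ultra-simple-atomistic ⟨∨,0⟩-semilattices: (1) for every ⟨∨,0⟩-semilattice K, GS(K) is an ultra-simple-atomistic ⟨∨,0⟩-semilattice, ε_K : K → GS(K) is a ⟨∨,0⟩-embedding, μ_K : GS(K) → K is a ⟨∨,0⟩-homomorphism, and μ_K ∘ ε_K = id_K; (2) for every ⟨∨,0⟩-embedding f : K → L, GS(f) : GS(K) → GS(L) is a ⟨∨,0⟩-embedding with GS(id_K) = id_{GS(K)}, GS(g ∘ f) = GS(g) ∘ GS(f), GS(f) ∘ ε_K = ε_L ∘ f, and μ_L ∘ GS(f) = f ∘ μ_K; (3) if K is a finite lattice, then GS(K) is a finite lattice-simple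 lattice. -/
universe u

/-- A `⟨∨,0⟩`-embedding: an injective `⟨∨,0⟩`-homomorphism. -/
def IsSupBotEmb {α β : Type*} [SemilatticeSup α] [OrderBot α] [SemilatticeSup β] [OrderBot β]
    (f : α → β) : Prop :=
  Function.Injective f ∧ IsSupBotHom f

/-- A partial order is a lattice order if all binary joins and meets exist. -/
def IsLatticeOrder (β : Type*) [PartialOrder β] : Prop :=
  ∀ a b : β, (∃ j, IsLUB {a, b} j) ∧ (∃ m, IsGLB {a, b} m)

/-- Lattice-simplicity: exactly two lattice congruences, i.e. nontrivial and every
equivalence relation compatible with binary joins and meets is equality or full. -/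
def OrderLatticeSimple (β : Type*) [PartialOrder β] : Prop :=
  Nontrivial β ∧
    ∀ r : β → β → Prop, Equivalence r →
      (∀ a b c d ja jb : β, IsLUB {a, c} ja → IsLUB {b, d} jb → r a b → r c d → r ja jb) →
      (∀ a b c d ma mb : β, IsGLB {a, c} ma → IsGLB {b, d} mb → r a b → r c d → r ma mb) →
      ((∀ a b : β, r a b ↔ a = b) ∨ (∀ a b : β, r a b))

/-- A partial order with least element is atomistic if every element is a join of
finitely many atoms. -/
def OrderAtomistic (β : Type*) [PartialOrder β] : Prop :=
  ∃ bot : β, IsBot bot ∧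
    ∀ x : β, ∃ t : Finset β, (∀ a ∈ t, bot < a ∧ ∀ c, c < a → c = bot) ∧ IsLUB ↑t x

/-- A `⟨∨,0⟩`-semilattice is ultra-simple-atomistic if it is the union of a directed
family of finite `⟨∨,0⟩`-subsemilattices, each of which is a lattice-simple atomistic
lattice under the induced ordering. -/
def UltraSimpleAtomistic (α : Type*) [SemilatticeSup α] [OrderBot α] : Prop :=
  ∃ F : Set (Set α), DirectedOn (· ⊆ ·) F ∧ (∀ x : α, ∃ s ∈ F, x ∈ s) ∧
    ∀ s ∈ F, IsSubSemilat s ∧ s.Finite ∧ IsLatticeOrder ↥s ∧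
      OrderLatticeSimple ↥s ∧ OrderAtomistic ↥s

/-!
`GS(K)` is obtained from `K` by inserting below every nonzero `x` a copy of the simple lattice
`M₃` with top `x`, and below all nonzero elements one further copy of `M₃`. The inclusion
`of : K → GS(K)` and the retraction `proj : GS(K) → K`, which sends the new atoms under `x` to `x`
and the bottom `M₃` to `0`, are natural in `⟨∨,0⟩`-embeddings.

A congruence identifying two distinct elements identifies `0` with some atom, since `GS(K)` is
atomistic; by simplicity of `M₃` it then identifies `0` with the top of the bottom `M₃`. Joining
that top with an atom under `x` gives `x`, so two atoms under `x` become congruent to `x`, and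
their meet `0` too: the congruence is total. Finally, `GS(K)` is the directed union of the
preimages under `proj` of the finite `⟨∨,0⟩`-subsemilattices `T` of `K`, and such a preimage is
isomorphic to `GS(T)`.
-/

namespace IsSupBotEmb

variable {α β : Type*} [SemilatticeSup α] [OrderBot α] [SemilatticeSup β] [OrderBot β]
  {f : α → β}

lemma map_eq_bot_iff (hf : IsSupBotEmb f) {x : α} : f x = ⊥ ↔ x = ⊥ :=
  ⟨fun h => hf.1 (h.trans hf.2.2.symm), fun h => h ▸ hf.2.2⟩

lemma le_iff_le (hf : IsSupBotEmb f) {x y : α} : f x ≤ f y ↔ x ≤ y := by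
  rw [← sup_eq_right, ← hf.2.1, hf.1.eq_iff, sup_eq_right]

end IsSupBotEmb

section

variable {β γ : Type*}

structure IsLatticeCongr [PartialOrder β] (r : β → β → Prop) : Prop where
  equivalence : Equivalence r
  isLUB : ∀ a b c d ja jb : β, IsLUB {a, c} ja → IsLUB {b, d} jb → r a b → r c d → r ja jb
  isGLB : ∀ a b c d ma mb : β, IsGLB {a, c} ma → IsGLB {b, d} mb → r a b → r c d → r ma mb

lemma orderLatticeSimple_iff [PartialOrder β] :
    OrderLatticeSimple β ↔ Nontrivial β ∧ ∀ r : β → β → Prop, IsLatticeCongr r →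
      (∀ a b, r a b ↔ a = b) ∨ ∀ a b, r a b :=
  and_congr_right fun _ =>
    ⟨fun h r hr => h r hr.equivalence hr.isLUB hr.isGLB, fun h r h₁ h₂ h₃ => h r ⟨h₁, h₂, h₃⟩⟩

lemma isGLB_pair_of_le [Preorder β] {a b : β} (h : a ≤ b) : IsGLB {a, b} a :=
  IsLeast.isGLB ⟨by simp, by simp [h]⟩

namespace IsLatticeCongr

variable {r : β → β → Prop}

lemma comap [PartialOrder β] [PartialOrder γ] (hr : IsLatticeCongr r) (e : γ ≃o β) :
    IsLatticeCongr fun u v => r (e u) (e v) where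
  equivalence := ⟨fun _ => hr.equivalence.refl _, hr.equivalence.symm, hr.equivalence.trans⟩
  isLUB a b c d ja jb ha hb :=
    hr.isLUB _ _ _ _ _ _ (by simpa [Set.image_pair] using e.isLUB_image'.mpr ha)
      (by simpa [Set.image_pair] using e.isLUB_image'.mpr hb)
  isGLB a b c d ma mb ha hb :=
    hr.isGLB _ _ _ _ _ _ (by simpa [Set.image_pair] using e.isGLB_image'.mpr ha)
      (by simpa [Set.image_pair] using e.isGLB_image'.mpr hb)

variable [SemilatticeSup β]

lemma sup (hr : IsLatticeCongr r) {a b c d : β} (hab : r a b) (hcd : r c d) :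
    r (a ⊔ c) (b ⊔ d) :=
  hr.isLUB _ _ _ _ _ _ isLUB_pair isLUB_pair hab hcd

lemma exists_lt (hr : IsLatticeCongr r) {a b : β} (hab : r a b) (hne : a ≠ b) :
    ∃ p q, p < q ∧ r p q := by
  have ha : r a (a ⊔ b) := by simpa using hr.sup (hr.equivalence.refl a) hab
  have hb : r b (a ⊔ b) := by simpa using hr.sup (hr.equivalence.symm hab) (hr.equivalence.refl b)
  by_cases h : a = a ⊔ b
  · exact ⟨b, a ⊔ b, lt_of_le_of_ne le_sup_right (h ▸ hne.symm), hb⟩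
  · exact ⟨a, a ⊔ b, lt_of_le_of_ne le_sup_left h, ha⟩

variable [OrderBot β]

lemma bot_of_isGLB (hr : IsLatticeCongr r) {p q a : β} (hpq : r p q) (haq : a ≤ q)
    (hpa : IsGLB {p, a} ⊥) : r ⊥ a :=
  hr.isGLB _ _ _ _ _ _ hpa (Set.pair_comm a q ▸ isGLB_pair_of_le haq) hpq (hr.equivalence.refl a)

lemma bot_of_le (hr : IsLatticeCongr r) {s t : β} (ht : r ⊥ t) (hst : s ≤ t) : r ⊥ s :=
  hr.bot_of_isGLB ht hst (isGLB_pair_of_le bot_le)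

lemma bot_of_diamond (hr : IsLatticeCongr r) {a b c t : β} (ha : r ⊥ a) (hab : a ⊔ b = t)
    (hac : a ⊔ c = t) (hbc : IsGLB {b, c} ⊥) : r ⊥ t := by
  have hb : r b t := by simpa [hab] using hr.sup ha (hr.equivalence.refl b)
  have hc : r c t := by simpa [hac] using hr.sup ha (hr.equivalence.refl c)
  exact hr.isGLB _ _ _ _ _ _ hbc (by simp) hb hc

end IsLatticeCongr

lemma IsAtom.isGLB_pair_of_not_le [PartialOrder β] [OrderBot β] {a p : β} (ha : IsAtom a)
    (hap : ¬ a ≤ p) : IsGLB {p, a} ⊥ := by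
  refine ⟨by simp, fun z hz => ?_⟩
  rcases ha.le_iff.mp (hz (by simp)) with rfl | rfl
  exacts [le_rfl, absurd (hz (by simp)) hap]

lemma exists_isAtom_le_not_le [SemilatticeSup β] [OrderBot β] {p q : β} (hqp : ¬ q ≤ p)
    (hq : ∃ s : Finset β, (∀ a ∈ s, IsAtom a) ∧ s.sup id = q) :
    ∃ a, IsAtom a ∧ a ≤ q ∧ ¬ a ≤ p := by
  obtain ⟨s, hs, rfl⟩ := hq
  by_contra! h
  exact hqp (Finset.sup_le fun a ha => h a (hs a ha) (Finset.le_sup (f := id) ha))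

lemma orderAtomistic_of_forall_exists [SemilatticeSup β] [OrderBot β]
    (h : ∀ z : β, ∃ s : Finset β, (∀ a ∈ s, IsAtom a) ∧ s.sup id = z) : OrderAtomistic β := by
  refine ⟨⊥, isBot_bot, fun z => ?_⟩
  obtain ⟨s, hs, rfl⟩ := h z
  exact ⟨s, fun a ha => ⟨(hs a ha).bot_lt, (hs a ha).2⟩, Finset.isLUB_sup_id⟩

lemma isLatticeOrder_of_finite [SemilatticeSup β] [OrderBot β] [Finite β] : IsLatticeOrder β := by
  intro a b
  refine ⟨⟨a ⊔ b, isLUB_pair⟩, ?_⟩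
  have hfin := Set.toFinite (lowerBounds {a, b})
  exact ⟨hfin.toFinset.sup id, fun c hc => Finset.sup_le fun z hz => hfin.mem_toFinset.mp hz hc,
    fun z hz => Finset.le_sup (f := id) (hfin.mem_toFinset.mpr hz)⟩

lemma IsSubSemilat.isLatticeOrder_of_finite [SemilatticeSup β] [OrderBot β] {s : Set β}
    (hs : IsSubSemilat s) (hfin : s.Finite) : IsLatticeOrder s := by
  let _ : SemilatticeSup s := Subtype.semilatticeSup fun _ _ hx hy => hs.2 hx hy
  let _ : OrderBot s := Subtype.orderBot hs.1
  have := hfin.to_subtype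
  exact _root_.isLatticeOrder_of_finite

variable [PartialOrder β] [PartialOrder γ]

lemma OrderLatticeSimple.of_orderIso (e : β ≃o γ) (h : OrderLatticeSimple β) :
    OrderLatticeSimple γ := by
  rw [orderLatticeSimple_iff] at h ⊢
  obtain ⟨hnt, h⟩ := h
  refine ⟨e.symm.toEquiv.nontrivial, fun r hr => ?_⟩
  rcases h _ (hr.comap e) with h | h
  · exact .inl fun a b => by simpa using h (e.symm a) (e.symm b)
  · exact .inr fun a b => by simpa using h (e.symm a) (e.symm b)

lemma OrderAtomistic.of_orderIso (e : β ≃o γ) (h : OrderAtomistic β) : OrderAtomistic γ := by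
  obtain ⟨bot, hbot, h⟩ := h
  refine ⟨e bot, fun y => e.le_symm_apply.mp (hbot _), fun y => ?_⟩
  obtain ⟨t, ht, hlub⟩ := h (e.symm y)
  refine ⟨t.map e.toEquiv.toEmbedding, ?_, ?_⟩
  · intro b hb
    obtain ⟨a, ha, rfl⟩ := Finset.mem_map.mp hb
    refine ⟨e.lt_iff_lt.mpr (ht a ha).1, fun c hc => ?_⟩
    rw [← e.apply_symm_apply c, (ht a ha).2 _ (e.symm_apply_lt.mpr hc)]
  · simpa [Finset.coe_map] using e.isLUB_image'.mpr hlub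

end

lemma exists_two_ne_of_fin_three (i : Fin 3) : ∃ j k : Fin 3, j ≠ i ∧ k ≠ i ∧ j ≠ k := by
  revert i
  decide

/-- The atoms `atom x _ i` and the top `of x` form the copy of `M₃` under `x`; the bottom copy
has atoms `diamond i` and top `diamondTop`. -/
inductive GSExt (K : Type u) [SemilatticeSup K] [OrderBot K] : Type u
  | of : K → GSExt K
  | atom : (x : K) → x ≠ ⊥ → Fin 3 → GSExt K
  | diamond : Fin 3 → GSExt K
  | diamondTop : GSExt K

namespace GSExt

variable {K : Type u} [SemilatticeSup K] [OrderBot K]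

protected def Le : GSExt K → GSExt K → Prop
  | of x, of y => x ≤ y
  | of x, atom .. => x = ⊥
  | of x, diamond _ => x = ⊥
  | of x, diamondTop => x = ⊥
  | atom x _ _, of y => x ≤ y
  | atom x _ i, atom y _ j => x = y ∧ i = j
  | atom .., diamond _ => False
  | atom .., diamondTop => False
  | diamond _, of y => y ≠ ⊥
  | diamond _, atom .. => False
  | diamond i, diamond j => i = j
  | diamond _, diamondTop => True
  | diamondTop, of y => y ≠ ⊥
  | diamondTop, atom .. => False
  | diamondTop, diamond _ => False
  | diamondTop, diamondTop => True

instance : PartialOrder (GSExt K) where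
  le := GSExt.Le
  le_refl a := by cases a <;> simp [GSExt.Le]
  le_trans a b c hab hbc := by
    cases a <;> cases b <;> cases c <;> simp_all [GSExt.Le] <;>
      first
        | exact le_trans hab hbc
        | (rintro rfl; simp_all)
  le_antisymm a b hab hba := by
    cases a <;> cases b <;> simp_all [GSExt.Le]
    exact le_antisymm hab hba

variable {x y : K} {hx : x ≠ ⊥} {hy : y ≠ ⊥} {i j : Fin 3}

@[simp] lemma of_le_of : (of x : GSExt K) ≤ of y ↔ x ≤ y := Iff.rfl
@[simp] lemma of_le_atom : (of x : GSExt K) ≤ atom y hy j ↔ x = ⊥ := Iff.rfl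
@[simp] lemma of_le_diamond : (of x : GSExt K) ≤ diamond j ↔ x = ⊥ := Iff.rfl
@[simp] lemma of_le_diamondTop : (of x : GSExt K) ≤ diamondTop ↔ x = ⊥ := Iff.rfl
@[simp] lemma atom_le_of : (atom x hx i : GSExt K) ≤ of y ↔ x ≤ y := Iff.rfl
@[simp] lemma atom_le_atom : (atom x hx i : GSExt K) ≤ atom y hy j ↔ x = y ∧ i = j := Iff.rfl
@[simp] lemma not_atom_le_diamond : ¬ (atom x hx i : GSExt K) ≤ diamond j := id
@[simp] lemma not_atom_le_diamondTop : ¬ (atom x hx i : GSExt K) ≤ diamondTop := id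
@[simp] lemma diamond_le_of : (diamond i : GSExt K) ≤ of y ↔ y ≠ ⊥ := Iff.rfl
@[simp] lemma not_diamond_le_atom : ¬ (diamond i : GSExt K) ≤ atom y hy j := id
@[simp] lemma diamond_le_diamond : (diamond i : GSExt K) ≤ diamond j ↔ i = j := Iff.rfl
@[simp] lemma diamond_le_diamondTop : (diamond i : GSExt K) ≤ diamondTop := trivial
@[simp] lemma diamondTop_le_of : (diamondTop : GSExt K) ≤ of y ↔ y ≠ ⊥ := Iff.rfl
@[simp] lemma not_diamondTop_le_atom : ¬ (diamondTop : GSExt K) ≤ atom y hy j := id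
@[simp] lemma not_diamondTop_le_diamond : ¬ (diamondTop : GSExt K) ≤ diamond j := id

instance : OrderBot (GSExt K) where
  bot := of ⊥
  bot_le a := by cases a <;> simp

@[simp] lemma of_bot : (of ⊥ : GSExt K) = ⊥ := rfl
@[simp] lemma of_eq_bot : (of x : GSExt K) = ⊥ ↔ x = ⊥ := of.injEq x ⊥ ▸ Iff.rfl
@[simp] lemma atom_ne_bot : (atom x hx i : GSExt K) ≠ ⊥ := nofun
@[simp] lemma diamond_ne_bot : (diamond i : GSExt K) ≠ ⊥ := nofun
@[simp] lemma diamondTop_ne_bot : (diamondTop : GSExt K) ≠ ⊥ := nofun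

open Classical in
protected noncomputable def sup : GSExt K → GSExt K → GSExt K
  | of x, of y => of (x ⊔ y)
  | of x, atom y hy j => if x = ⊥ then atom y hy j else of (x ⊔ y)
  | of x, diamond j => if x = ⊥ then diamond j else of x
  | of x, diamondTop => if x = ⊥ then diamondTop else of x
  | atom x hx i, of y => if y = ⊥ then atom x hx i else of (x ⊔ y)
  | atom x hx i, atom y _ j => if x = y ∧ i = j then atom x hx i else of (x ⊔ y)
  | atom x _ _, diamond _ => of x
  | atom x _ _, diamondTop => of x
  | diamond i, of y => if y = ⊥ then diamond i else of y
  | diamond _, atom y _ _ => of y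
  | diamond i, diamond j => if i = j then diamond i else diamondTop
  | diamond _, diamondTop => diamondTop
  | diamondTop, of y => if y = ⊥ then diamondTop else of y
  | diamondTop, atom y _ _ => of y
  | diamondTop, diamond _ => diamondTop
  | diamondTop, diamondTop => diamondTop

noncomputable instance : SemilatticeSup (GSExt K) where
  sup := GSExt.sup
  le_sup_left a b := by
    cases a <;> cases b <;> simp only [GSExt.sup] <;> (try split_ifs) <;> simp_all
  le_sup_right a b := by
    cases a <;> cases b <;> simp only [GSExt.sup] <;> (try split_ifs) <;> simp_all
  sup_le a b c hac hbc := by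
    cases a <;> cases b <;> cases c <;> simp only [GSExt.sup] <;> (try split_ifs) <;> simp_all

lemma sup_def (a b : GSExt K) : a ⊔ b = GSExt.sup a b := rfl


lemma atom_sup_atom_of_ne (hij : i ≠ j) : (atom x hx i : GSExt K) ⊔ atom x hx j = of x := by
  simp [sup_def, GSExt.sup, hij]

lemma diamondTop_sup_atom : (diamondTop : GSExt K) ⊔ atom x hx i = of x := rfl

lemma diamond_sup_diamond_of_ne (hij : i ≠ j) : (diamond i : GSExt K) ⊔ diamond j = diamondTop := by
  simp [sup_def, GSExt.sup, hij]

instance [Finite K] : Finite (GSExt K) := by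
  let encode : GSExt K → K ⊕ (K × Fin 3) ⊕ Fin 3 ⊕ Unit
    | of x => .inl x
    | atom x _ i => .inr (.inl (x, i))
    | diamond i => .inr (.inr (.inl i))
    | diamondTop => .inr (.inr (.inr ()))
  refine Finite.of_injective encode fun a b h => ?_
  cases a <;> cases b <;> simp_all [encode]

def proj : GSExt K → K
  | of x | atom x _ _ => x
  | diamond _ | diamondTop => ⊥

lemma proj_sup (a b : GSExt K) : (a ⊔ b).proj = a.proj ⊔ b.proj := by
  cases a <;> cases b <;> simp only [sup_def, GSExt.sup] <;> (try split_ifs) <;>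
    simp_all [proj]

lemma isSupBotHom_proj : IsSupBotHom (proj : GSExt K → K) := ⟨proj_sup, rfl⟩

lemma isSupBotEmb_of : IsSupBotEmb (of : K → GSExt K) :=
  ⟨fun _ _ h => by injection h, fun _ _ => rfl, rfl⟩

section Map

variable {L M : Type u} [SemilatticeSup L] [OrderBot L] [SemilatticeSup M] [OrderBot M]
  {f : K → L} (hf : IsSupBotEmb f)

def map (f : K → L) (hf : IsSupBotEmb f) : GSExt K → GSExt L
  | of x => of (f x)
  | atom x hx i => atom (f x) (hf.map_eq_bot_iff.not.mpr hx) i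
  | diamond i => diamond i
  | diamondTop => diamondTop

lemma map_id (h : IsSupBotEmb (id : K → K)) : map id h = id :=
  funext fun z => by cases z <;> rfl

lemma map_comp {g : L → M} (hg : IsSupBotEmb g) (hgf : IsSupBotEmb (g ∘ f)) :
    map (g ∘ f) hgf = map g hg ∘ map f hf :=
  funext fun z => by cases z <;> rfl

lemma proj_map (z : GSExt K) : (map f hf z).proj = f z.proj := by
  cases z <;> simp [map, proj, hf.2.2]

lemma map_le_map_iff {a b : GSExt K} : map f hf a ≤ map f hf b ↔ a ≤ b := by
  cases a <;> cases b <;> simp [map, hf.le_iff_le, hf.map_eq_bot_iff, hf.1.eq_iff]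

lemma map_injective : Function.Injective (map f hf) := fun _ _ h =>
  le_antisymm ((map_le_map_iff hf).mp h.le) ((map_le_map_iff hf).mp h.ge)

lemma map_sup (a b : GSExt K) : map f hf (a ⊔ b) = map f hf a ⊔ map f hf b := by
  cases a <;> cases b <;> simp only [sup_def, GSExt.sup, map] <;> (try split_ifs) <;>
    simp_all [hf.2.1, hf.map_eq_bot_iff, hf.1.eq_iff]

lemma isSupBotEmb_map : IsSupBotEmb (map f hf) :=
  ⟨map_injective hf, map_sup hf, by simp [← of_bot, map, hf.2.2]⟩

lemma range_map : Set.range (map f hf) = proj ⁻¹' Set.range f := by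
  ext z
  refine ⟨?_, fun ⟨x, hz⟩ => ?_⟩
  · rintro ⟨z, rfl⟩
    exact ⟨z.proj, (proj_map hf z).symm⟩
  cases z with
  | of y => exact ⟨of x, by simp_all [map, proj]⟩
  | atom y hy i =>
    exact ⟨atom x (by rintro rfl; exact hy (hz.symm.trans hf.2.2)) i, by simp_all [map, proj]⟩
  | diamond i => exact ⟨diamond i, rfl⟩
  | diamondTop => exact ⟨diamondTop, rfl⟩

end Map

lemma le_atom_iff {z : GSExt K} : z ≤ atom x hx i ↔ z = ⊥ ∨ z = atom x hx i := by
  cases z <;> simp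

lemma le_diamond_iff {z : GSExt K} : z ≤ diamond i ↔ z = ⊥ ∨ z = diamond i := by
  cases z <;> simp

lemma isAtom_atom : IsAtom (atom x hx i) :=
  ⟨atom_ne_bot, fun _ hz => (le_atom_iff.mp hz.le).resolve_right hz.ne⟩

lemma isAtom_diamond : IsAtom (diamond i : GSExt K) :=
  ⟨diamond_ne_bot, fun _ hz => (le_diamond_iff.mp hz.le).resolve_right hz.ne⟩

lemma exists_finset_isAtom_sup_eq (z : GSExt K) :
    ∃ s : Finset (GSExt K), (∀ a ∈ s, IsAtom a) ∧ s.sup id = z := by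
  classical
  cases z with
  | of x =>
    by_cases hx : x = ⊥
    · exact ⟨∅, by simp, by simp [hx]⟩
    · exact ⟨{atom x hx 0, atom x hx 1}, by simp [isAtom_atom],
        by simp [atom_sup_atom_of_ne (show (0 : Fin 3) ≠ 1 by decide)]⟩
  | atom x hx i => exact ⟨{atom x hx i}, by simp [isAtom_atom], by simp⟩
  | diamond i => exact ⟨{diamond i}, by simp [isAtom_diamond], by simp⟩
  | diamondTop => exact ⟨{diamond 0, diamond 1}, by simp [isAtom_diamond],
      by simp [diamond_sup_diamond_of_ne (show (0 : Fin 3) ≠ 1 by decide)]⟩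

variable {r : GSExt K → GSExt K → Prop}

lemma bot_diamondTop_of_isAtom (hr : IsLatticeCongr r) {a : GSExt K} (ha : IsAtom a)
    (h : r ⊥ a) : r ⊥ diamondTop := by
  cases a with
  | of x =>
    have hx : x ≠ ⊥ := by rintro rfl; exact ha.1 rfl
    exact (atom_ne_bot (ha.2 (atom x hx 0) (lt_of_le_not_ge (by simp) (by simpa)))).elim
  | atom x hx i =>
    obtain ⟨j, k, hji, hki, hjk⟩ := exists_two_ne_of_fin_three i
    have hof : r ⊥ (of x) :=
      hr.bot_of_diamond h (atom_sup_atom_of_ne hji.symm) (atom_sup_atom_of_ne hki.symm)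
        (isAtom_atom.isGLB_pair_of_not_le (by simp [hjk.symm]))
    exact hr.bot_of_le hof (by simpa)
  | diamond i =>
    obtain ⟨j, k, hji, hki, hjk⟩ := exists_two_ne_of_fin_three i
    exact hr.bot_of_diamond h (diamond_sup_diamond_of_ne hji.symm)
      (diamond_sup_diamond_of_ne hki.symm)
      (isAtom_diamond.isGLB_pair_of_not_le (by simp [hjk.symm]))
  | diamondTop =>
    exact (diamond_ne_bot (ha.2 (diamond 0) (lt_of_le_not_ge (by simp) (by simp)))).elim

lemma bot_of_bot_diamondTop (hr : IsLatticeCongr r) (h : r ⊥ diamondTop) (z : GSExt K) :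
    r ⊥ z := by
  have hof (x : K) : r ⊥ (of x) := by
    by_cases hx : x = ⊥
    · simpa [hx] using hr.equivalence.refl ⊥
    · exact hr.bot_of_diamond h (diamondTop_sup_atom (hx := hx) (i := 0))
        (diamondTop_sup_atom (hx := hx) (i := 1))
        (isAtom_atom.isGLB_pair_of_not_le (by simp))
  cases z with
  | of x => exact hof x
  | atom x hx i => exact hr.bot_of_le (hof x) (by simp)
  | diamond i => exact hr.bot_of_le h (by simp)
  | diamondTop => exact h

theorem orderLatticeSimple : OrderLatticeSimple (GSExt K) := by
  refine orderLatticeSimple_iff.mpr ⟨⟨⊥, diamondTop, diamondTop_ne_bot.symm⟩, fun r hr => ?_⟩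
  by_cases hdiscrete : ∀ a b, r a b → a = b
  · exact .inl fun a b => ⟨hdiscrete a b, fun h => h ▸ hr.equivalence.refl a⟩
  push Not at hdiscrete
  obtain ⟨a, b, hab, hne⟩ := hdiscrete
  obtain ⟨p, q, hpq, hrpq⟩ := hr.exists_lt hab hne
  obtain ⟨c, hc, hcq, hcp⟩ := exists_isAtom_le_not_le hpq.not_ge (exists_finset_isAtom_sup_eq q)
  have hbot := bot_of_bot_diamondTop hr <| bot_diamondTop_of_isAtom hr hc <|
    hr.bot_of_isGLB hrpq hcq (hc.isGLB_pair_of_not_le hcp)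
  exact .inr fun u v => hr.equivalence.trans (hr.equivalence.symm (hbot u)) (hbot v)

noncomputable def orderIsoPreimageProj {L : Type u} [SemilatticeSup L] [OrderBot L] {f : K → L}
    (hf : IsSupBotEmb f) : GSExt K ≃o proj ⁻¹' Set.range f :=
  (OrderEmbedding.ofMapLEIff (map f hf) fun _ _ => map_le_map_iff hf).orderIso.trans
    (OrderIso.setCongr _ _ (range_map hf))

lemma exists_isSubSemilat_finite_superset {s : Set K} (hs : s.Finite) :
    ∃ T, s ⊆ T ∧ IsSubSemilat T ∧ T.Finite :=
  ⟨supClosure (insert ⊥ s), (Set.subset_insert _ _).trans subset_supClosure,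
    ⟨subset_supClosure (Set.mem_insert _ _), supClosed_supClosure⟩, (hs.insert ⊥).supClosure⟩

lemma isSubSemilat_preimage_proj {T : Set K} (hT : IsSubSemilat T) :
    IsSubSemilat (proj ⁻¹' T) :=
  ⟨hT.1, fun a ha b hb => by simpa [Set.mem_preimage, proj_sup] using hT.2 ha hb⟩

theorem ultraSimpleAtomistic : UltraSimpleAtomistic (GSExt K) := by
  refine ⟨{s | ∃ T : Set K, IsSubSemilat T ∧ T.Finite ∧ s = proj ⁻¹' T}, ?_, fun z => ?_, ?_⟩
  · rintro _ ⟨T₁, -, hT₁, rfl⟩ _ ⟨T₂, -, hT₂, rfl⟩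
    obtain ⟨T, hsub, hT, hTfin⟩ := exists_isSubSemilat_finite_superset (hT₁.union hT₂)
    exact ⟨_, ⟨T, hT, hTfin, rfl⟩, Set.preimage_mono (Set.subset_union_left.trans hsub),
      Set.preimage_mono (Set.subset_union_right.trans hsub)⟩
  · obtain ⟨T, hsub, hT, hTfin⟩ := exists_isSubSemilat_finite_superset (Set.finite_singleton z.proj)
    exact ⟨_, ⟨T, hT, hTfin, rfl⟩, hsub rfl⟩
  rintro _ ⟨T, hT, hTfin, rfl⟩
  let _ : SemilatticeSup T := Subtype.semilatticeSup fun _ _ hx hy => hT.2 hx hy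
  let _ : OrderBot T := Subtype.orderBot hT.1
  have := hTfin.to_subtype
  have hval : IsSupBotEmb (Subtype.val : T → K) := ⟨Subtype.val_injective, fun _ _ => rfl, rfl⟩
  let e : GSExt T ≃o proj ⁻¹' T :=
    (orderIsoPreimageProj hval).trans (.setCongr _ _ (by rw [Subtype.range_coe]))
  have hsub := isSubSemilat_preimage_proj hT
  have hfin : (proj ⁻¹' T).Finite := Set.finite_coe_iff.mp (.of_equiv _ e.toEquiv)
  exact ⟨hsub, hfin, hsub.isLatticeOrder_of_finite hfin, orderLatticeSimple.of_orderIso e,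
    (orderAtomistic_of_forall_exists exists_finset_isAtom_sup_eq).of_orderIso e⟩

end GSExt

/-- There is a functorial retraction `⟨GS, ε, μ⟩` of the category of `⟨∨,0⟩`-semilattices
with `⟨∨,0⟩`-embeddings to the full subcategory of ultra-simple-atomistic
`⟨∨,0⟩`-semilattices; moreover `GS` sends finite lattices to finite lattice-simple
lattices. -/
theorem stmt3 : ∃ (GS : SL.{u} → SL.{u})
    (GSm : ∀ {K L : SL.{u}} (f : K → L), IsSupBotEmb f → ((GS K) → (GS L)))
    (ε : ∀ K : SL.{u}, K → GS K) (μ : ∀ K : SL.{u}, GS K → K),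
    (∀ K : SL.{u}, UltraSimpleAtomistic (GS K).carrier) ∧
    (∀ K : SL.{u}, IsSupBotEmb (ε K)) ∧
    (∀ K : SL.{u}, IsSupBotHom (μ K)) ∧
    (∀ K : SL.{u}, μ K ∘ ε K = id) ∧
    (∀ (K L : SL.{u}) (f : K → L) (hf : IsSupBotEmb f), IsSupBotEmb (GSm f hf)) ∧
    (∀ (K : SL.{u}) (h : IsSupBotEmb (id : K → K)), GSm id h = id) ∧
    (∀ (K L M : SL.{u}) (f : K → L) (g : L → M) (hf : IsSupBotEmb f)
      (hg : IsSupBotEmb g) (hgf : IsSupBotEmb (g ∘ f)),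
      GSm (g ∘ f) hgf = GSm g hg ∘ GSm f hf) ∧
    (∀ (K L : SL.{u}) (f : K → L) (hf : IsSupBotEmb f), GSm f hf ∘ ε K = ε L ∘ f) ∧
    (∀ (K L : SL.{u}) (f : K → L) (hf : IsSupBotEmb f), μ L ∘ GSm f hf = f ∘ μ K) ∧
    (∀ K : SL.{u}, Finite K.carrier → (∀ a b : K.carrier, ∃ m, IsGLB {a, b} m) →
      Finite (GS K).carrier ∧ IsLatticeOrder (GS K).carrier ∧
        OrderLatticeSimple (GS K).carrier) :=
  ⟨fun K => ⟨GSExt K⟩, fun f hf => GSExt.map f hf, fun _ => GSExt.of, fun _ => GSExt.proj,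
    fun _ => GSExt.ultraSimpleAtomistic,
    fun _ => GSExt.isSupBotEmb_of,
    fun _ => GSExt.isSupBotHom_proj,
    fun _ => rfl,
    fun _ _ _ hf => GSExt.isSupBotEmb_map hf,
    fun _ => GSExt.map_id,
    fun _ _ _ _ _ hf hg hgf => GSExt.map_comp hf hg hgf,
    fun _ _ _ _ => rfl,
    fun _ _ _ hf => funext (GSExt.proj_map hf),
    fun _ _ _ => ⟨inferInstance, isLatticeOrder_of_finite, GSExt.orderLatticeSimple⟩⟩
end

section
/- Let I be a directed preorder, let ⟨L_i, t_{i,j}⟩_{i ≤ j in I} be a direct system of finite atomistic lattices and lattice homomorphisms, let L be a lattice equipped with lattice homomorphisms f_i : L_i → L satisfying f_j ∘ t_{i,j} = f_i for i ≤ j and whose ranges cover L (so L is a directed colimit of the L_i), let K be a finite lattice, and let g : L → K be a surjective lattice homomorphism. Then K is atomistic: every element of K is the join of the atoms of K below it. -/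
/-- A lattice homomorphism: preserves binary joins and binary meets. -/
def IsLatticeHom {α β : Type*} [Lattice α] [Lattice β] (f : α → β) : Prop :=
  (∀ a b : α, f (a ⊔ b) = f a ⊔ f b) ∧ (∀ a b : α, f (a ⊓ b) = f a ⊓ f b)

/-- A lattice is atomistic if it has a least element `bot` and every element is the
least upper bound of the set of atoms below it. -/
def AtomisticOrd (β : Type*) [PartialOrder β] : Prop :=
  ∃ bot : β, IsBot bot ∧
    ∀ x : β, IsLUB {a : β | (bot < a ∧ ∀ c, c < a → c = bot) ∧ a ≤ x} x

lemma key_atomistic_image {M K : Type*} [Lattice M] [Finite M] [Lattice K]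
    (hM : AtomisticOrd M) (h : M → K) (hh : IsLatticeHom h)
    (hs : Function.Surjective h) : AtomisticOrd K := by
  classical
  obtain ⟨b0, hb0, hat⟩ := hM
  have hmono : ∀ {a b : M}, a ≤ b → h a ≤ h b := by
    intro a b hab
    have h2 : h (a ⊓ b) = h a ⊓ h b := hh.2 a b
    rw [inf_eq_left.mpr hab] at h2
    exact h2.le.trans inf_le_right
  have hbK : IsBot (h b0) := by
    intro z
    obtain ⟨y, rfl⟩ := hs z
    exact hmono (hb0 y)
  -- the "largest preimage below" map m
  have hSfin : ∀ x : K, {y : M | h y ≤ x}.Finite := fun x => Set.toFinite _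
  have hSne : ∀ x : K, ((hSfin x).toFinset).Nonempty := by
    intro x
    exact ⟨b0, (hSfin x).mem_toFinset.mpr (hbK x)⟩
  set m : K → M := fun x => ((hSfin x).toFinset).sup' (hSne x) id with hm
  have hmem : ∀ {x : K} {y : M}, h y ≤ x → y ≤ m x := by
    intro x y hy
    exact Finset.le_sup' id ((hSfin x).mem_toFinset.mpr hy)
  have hhm : ∀ x : K, h (m x) = x := by
    intro x
    have hsup : h (m x) = ((hSfin x).toFinset).sup' (hSne x) (h ∘ id) :=
      map_finset_sup' (⟨h, fun a b => hh.1 a b⟩ : SupHom M K) (hSne x) id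
    have hle : h (m x) ≤ x := by
      rw [hsup]
      apply Finset.sup'_le
      intro y hy
      exact (hSfin x).mem_toFinset.mp hy
    obtain ⟨y, hy⟩ := hs x
    have h5 := hmono (hmem hy.le)
    rw [hy] at h5
    exact le_antisymm hle h5
  -- image of an atom is bottom or an atom
  have hatomim : ∀ a : M, (b0 < a ∧ ∀ c, c < a → c = b0) →
      h a = h b0 ∨ (h b0 < h a ∧ ∀ c, c < h a → c = h b0) := by
    intro a ha
    by_cases hab : h a = h b0
    · exact Or.inl hab
    · refine Or.inr ⟨lt_of_le_of_ne (hbK _) (Ne.symm hab), ?_⟩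
      intro c hc
      have h1 : ¬ a ≤ m c := by
        intro hle
        have h2 := hmono hle
        rw [hhm c] at h2
        exact absurd h2 hc.not_ge
      have h2 : m c ⊓ a = b0 :=
        ha.2 _ (lt_of_le_of_ne inf_le_right (fun he => h1 (he ▸ inf_le_left)))
      have h3 := hh.2 (m c) a
      rw [h2, hhm c, inf_eq_left.mpr hc.le] at h3
      exact h3.symm
  refine ⟨h b0, hbK, ?_⟩
  intro x
  constructor
  · intro a ha
    exact ha.2
  · intro u hu
    have hlub := hat (m x)
    set T := {a : M | (b0 < a ∧ ∀ c, c < a → c = b0) ∧ a ≤ m x} with hT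
    have hTfin : T.Finite := Set.toFinite _
    have hne : (insert b0 hTfin.toFinset).Nonempty := ⟨b0, Finset.mem_insert_self _ _⟩
    have hmx : m x = (insert b0 hTfin.toFinset).sup' hne id := by
      apply le_antisymm
      · apply hlub.2
        intro a haT
        exact Finset.le_sup' id
          (Finset.mem_insert_of_mem (hTfin.mem_toFinset.mpr haT))
      · apply Finset.sup'_le
        intro y hy
        rcases Finset.mem_insert.mp hy with rfl | hy
        · exact hb0 _
        · exact (hTfin.mem_toFinset.mp hy).2
    have key2 : h (m x) = (insert b0 hTfin.toFinset).sup' hne (h ∘ id) := by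
      rw [hmx]
      exact map_finset_sup' (⟨h, fun a b => hh.1 a b⟩ : SupHom M K) hne id
    have hx : x = h (m x) := (hhm x).symm
    rw [hx, key2]
    apply Finset.sup'_le
    intro y hy
    rcases Finset.mem_insert.mp hy with rfl | hyT
    · exact hbK u
    · have hyT' := hTfin.mem_toFinset.mp hyT
      rcases hatomim y hyT'.1 with he | hatK
      · show h y ≤ u
        rw [he]
        exact hbK u
      · apply hu
        refine ⟨hatK, ?_⟩
        show h y ≤ x
        rw [← hhm x]
        exact hmono hyT'.2

/-- Any finite lattice which is a surjective lattice-homomorphic image of a directed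
colimit of finite atomistic lattices is atomistic. -/
theorem stmt7 {I : Type*} [Preorder I] (hdir : ∀ i j : I, ∃ k, i ≤ k ∧ j ≤ k)
    {L : I → Type*} [∀ i, Lattice (L i)] [∀ i, Finite (L i)]
    (hatom : ∀ i, AtomisticOrd (L i))
    (t : ∀ ⦃i j : I⦄, i ≤ j → L i → L j)
    (ht_hom : ∀ ⦃i j : I⦄ (h : i ≤ j), IsLatticeHom (t h))
    (ht_id : ∀ (i : I) (h : i ≤ i), t h = id)
    (ht_comp : ∀ ⦃i j k : I⦄ (hij : i ≤ j) (hjk : j ≤ k),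
      t hjk ∘ t hij = t (hij.trans hjk))
    {Lc : Type*} [Lattice Lc]
    (f : ∀ i, L i → Lc) (hf_hom : ∀ i, IsLatticeHom (f i))
    (hf_compat : ∀ ⦃i j : I⦄ (h : i ≤ j), f j ∘ t h = f i)
    (hf_cover : ∀ x : Lc, ∃ (i : I) (y : L i), f i y = x)
    {K : Type*} [Lattice K] [Finite K] [Nonempty K]
    (g : Lc → K) (hg : IsLatticeHom g) (hg_surj : Function.Surjective g) :
    AtomisticOrd K := by
  classical
  haveI : IsDirected I (· ≤ ·) := ⟨hdir⟩
  -- for each k : K choose an index and preimage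
  have hchoice : ∀ k : K, ∃ (i : I) (y : L i), g (f i y) = k := by
    intro k
    obtain ⟨x, hx⟩ := hg_surj k
    obtain ⟨i, y, hy⟩ := hf_cover x
    exact ⟨i, y, by rw [hy, hx]⟩
  choose idx yb hyb using hchoice
  haveI : Nonempty I := ⟨idx (Classical.arbitrary K)⟩
  haveI : Fintype K := Fintype.ofFinite K
  obtain ⟨i₀, hi₀⟩ := (Finset.univ.image idx).exists_le
  have hi : ∀ k : K, idx k ≤ i₀ := fun k =>
    hi₀ _ (Finset.mem_image_of_mem idx (Finset.mem_univ k))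
  -- g ∘ f i₀ is a surjective lattice hom
  have hsurj : Function.Surjective (g ∘ f i₀) := by
    intro k
    refine ⟨t (hi k) (yb k), ?_⟩
    have hc := congrFun (hf_compat (hi k)) (yb k)
    simp only [Function.comp] at hc ⊢
    rw [hc, hyb]
  have hhom : IsLatticeHom (g ∘ f i₀) := by
    constructor
    · intro a b
      simp only [Function.comp]
      rw [(hf_hom i₀).1, hg.1]
    · intro a b
      simp only [Function.comp]
      rw [(hf_hom i₀).2, hg.2]
  exact key_atomistic_image (hatom i₀) (g ∘ f i₀) hhom hsurj
end

section
/- Let C be a category and let M be an ideal of monics of C, i.e., a class of morphisms of C containing all identities, closed under composition, such that every member of M is a monomorphism, and such that whenever a composite g ∘ f belongs to M, so does f. For an object S of C, let M(S) denote the class of morphisms in M with codomain S, quasi-ordered by u ⊴_S v if and only if there exists a morphism h with u = v ∘ h, and write lh(S) for the length of this quasi-ordered class, i.e., the supremum of the natural numbers n for which there exists a chain u_0 ◁_S u_1 ◁_S ⋯ ◁_S u_n in M(S), where u ◁_S v means u ⊴_S v and not v ⊴_S u. Then for every f : X → Y in M such that lh(X) and lh(Y) are both finite, f is an isomorphism if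 and only if lh(X) = lh(Y). -/
universe v u

open CategoryTheory

/-- The factoring quasi-order on morphisms with codomain `S` (with arbitrary domains):
`x ⊴_S y` iff `x` factors through `y`. -/
def leM {C : Type u} [Category.{v} C] {S : C} (x y : Σ Z : C, Z ⟶ S) : Prop :=
  ∃ h : x.1 ⟶ y.1, x.2 = h ≫ y.2

/-- The strict version of `leM`. -/
def ltM {C : Type u} [Category.{v} C] {S : C} (x y : Σ Z : C, Z ⟶ S) : Prop :=
  leM x y ∧ ¬ leM y x

/-- `MChain M S n` says there is a strictly increasing chain `u_0 ◁ u_1 ◁ ⋯ ◁ u_n`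
in the quasi-ordered class `M(S)` of morphisms of `M` with codomain `S`. -/
def MChain {C : Type u} [Category.{v} C] (M : MorphismProperty C) (S : C) (n : ℕ) :
    Prop :=
  ∃ c : Fin (n + 1) → Σ Z : C, Z ⟶ S,
    (∀ i, M (c i).2) ∧ ∀ i : Fin n, ltM (c i.castSucc) (c i.succ)

section Aux

variable {C : Type u} [Category.{v} C]

lemma leM_comp_iff {S T : C} (f : S ⟶ T) [Mono f] (x y : Σ Z : C, Z ⟶ S) :
    leM ⟨x.1, x.2 ≫ f⟩ ⟨y.1, y.2 ≫ f⟩ ↔ leM x y := by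
  constructor
  · rintro ⟨k, e⟩
    refine ⟨k, ?_⟩
    simp only [← Category.assoc] at e
    exact (cancel_mono f).mp e
  · rintro ⟨k, e⟩
    exact ⟨k, by simp [e]⟩

lemma ltM_comp_iff {S T : C} (f : S ⟶ T) [Mono f] (x y : Σ Z : C, Z ⟶ S) :
    ltM ⟨x.1, x.2 ≫ f⟩ ⟨y.1, y.2 ≫ f⟩ ↔ ltM x y := by
  unfold ltM
  rw [leM_comp_iff, leM_comp_iff]

lemma mchain_le {M : MorphismProperty C} {S : C} {n m : ℕ} (h : MChain M S n)
    (hmn : m ≤ n) : MChain M S m := by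
  obtain ⟨c, hc1, hc2⟩ := h
  refine ⟨fun i => c ⟨i.1, by omega⟩, fun i => hc1 _, fun i => ?_⟩
  exact hc2 ⟨i.1, by omega⟩

lemma mchain_map {M : MorphismProperty C} {X Y : C} (f : X ⟶ Y) [Mono f]
    (hMf : ∀ ⦃Z : C⦄ (u : Z ⟶ X), M u → M (u ≫ f)) {n : ℕ}
    (h : MChain M X n) : MChain M Y n := by
  obtain ⟨c, hc1, hc2⟩ := h
  refine ⟨fun i => ⟨(c i).1, (c i).2 ≫ f⟩, fun i => hMf _ (hc1 i), fun i => ?_⟩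
  exact (ltM_comp_iff f _ _).mpr (hc2 i)

lemma mchain_extend {M : MorphismProperty C} (h_id : ∀ X : C, M (𝟙 X))
    {X Y : C} (f : X ⟶ Y) [Mono f]
    (hMf : ∀ ⦃Z : C⦄ (u : Z ⟶ X), M u → M (u ≫ f))
    (hni : ¬ IsIso f) {n : ℕ} (h : MChain M X n) : MChain M Y (n + 1) := by
  obtain ⟨c, hc1, hc2⟩ := h
  refine ⟨Fin.snoc (fun i => ⟨(c i).1, (c i).2 ≫ f⟩) ⟨Y, 𝟙 Y⟩, fun i => ?_, fun i => ?_⟩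
  · rcases lt_or_eq_of_le (Nat.lt_succ_iff.mp i.isLt) with hi | hi
    · have : i = Fin.castSucc ⟨i.1, by omega⟩ := by ext; simp
      rw [this, Fin.snoc_castSucc]
      exact hMf _ (hc1 _)
    · have : i = Fin.last (n + 1) := by ext; simpa using hi
      rw [this, Fin.snoc_last]
      exact h_id Y
  · rcases lt_or_eq_of_le (Nat.lt_succ_iff.mp i.isLt) with hi | hi
    · have h1 : i.castSucc = Fin.castSucc (Fin.castSucc ⟨i.1, hi⟩) := by ext; simp
      have h2 : i.succ = Fin.castSucc (Fin.succ ⟨i.1, hi⟩) := by ext; simp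
      rw [h1, h2, Fin.snoc_castSucc, Fin.snoc_castSucc]
      exact (ltM_comp_iff f _ _).mpr (hc2 ⟨i.1, hi⟩)
    · have h1 : i.castSucc = Fin.castSucc (Fin.last n) := by ext; simpa using hi
      have h2 : i.succ = Fin.last (n + 1) := by ext; simpa using hi
      rw [h1, h2, Fin.snoc_castSucc, Fin.snoc_last]
      constructor
      · exact ⟨(c (Fin.last n)).2 ≫ f, by simp⟩
      · rintro ⟨k, e⟩
        apply hni
        have : IsSplitEpi f :=
          ⟨⟨k ≫ (c (Fin.last n)).2, by rw [Category.assoc]; exact e.symm⟩⟩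
        exact isIso_of_mono_of_isSplitEpi f

end Aux

/-- Let `M` be an ideal of monics of a category `C` and let `f : X ⟶ Y` be in `M`,
where the lengths of the quasi-ordered classes `M(X)` and `M(Y)` are finite, equal to
`nX` and `nY` respectively. Then `f` is an isomorphism iff `nX = nY`. -/
theorem stmt13 {C : Type u} [Category.{v} C] (M : MorphismProperty C)
    (h_id : ∀ X : C, M (𝟙 X))
    (h_comp : ∀ {X Y Z : C} (f : X ⟶ Y) (g : Y ⟶ Z), M f → M g → M (f ≫ g))
    (h_mono : ∀ {X Y : C} (f : X ⟶ Y), M f → Mono f)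
    (h_cancel : ∀ {X Y Z : C} (f : X ⟶ Y) (g : Y ⟶ Z), M (f ≫ g) → M f)
    {X Y : C} (f : X ⟶ Y) (hf : M f)
    (nX : ℕ) (hX : MChain M X nX ∧ ¬ MChain M X (nX + 1))
    (nY : ℕ) (hY : MChain M Y nY ∧ ¬ MChain M Y (nY + 1)) :
    IsIso f ↔ nX = nY := by
  have : Mono f := h_mono f hf
  constructor
  · intro hiso
    have hXY : MChain M Y nX :=
      mchain_map f (fun Z u hu => h_comp u f hu hf) hX.1
    have hYX : MChain M X nY := by
      have : Mono (inv f) := by infer_instance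
      refine mchain_map (inv f) (fun Z u hu => ?_) hY.1
      exact h_cancel (u ≫ inv f) f (by simpa using hu)
    by_contra hne
    rcases Nat.lt_or_ge nX nY with h | h
    · exact hX.2 (mchain_le hYX (by omega))
    · exact hY.2 (mchain_le hXY (by omega))
  · intro he
    by_contra hni
    exact hY.2 (he ▸ mchain_extend h_id f (fun Z u hu => h_comp u f hu hf) hni hX.1)
end
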